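/- arXiv:2505.10800 — 2 statements merged into one kernel-verified Lean document; each statement's English description precedes it below -/
import Mathlib

section
/- Let λ > 0, μ = 2/(2λ + L_f), δ > 0, and let x, x' ∈ ℝⁿ with x ≠ x'. Let η ∈ ∂h(x) and define the map S(z) = Prox_{μg}((1 − μλ)z − μ∇f(z) + μλx + μη). Then for any starting point z₀ ∈ ℝⁿ, the Picard iterates z_m = S(z_{m−1}) satisfy ‖z_m − z_{m−1}‖ ≤ δ‖x' − x‖ for all sufficiently large m; i.e., the inner loop of the cDCA terminates in a finite number of iterations whenever x ≠ x'. -/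
/-!
With `q = 1 - μλ = L_f / (2λ + L_f) < 1`, the map `S` is a `q`-contraction. Indeed `Prox_{μg}` is
nonexpansive (firmly, by its variational inequality), and by the Baillon–Haddad cocoercivity
`‖∇f z - ∇f w‖² ≤ L_f ⟪∇f z - ∇f w, z - w⟫` the gradient step `z ↦ q z - μ ∇f z` is
`q`-Lipschitz exactly because `μ L_f = 2q`. So the steps `z_{m+1} - z_m` decay geometrically;
being summable they tend to `0`, and eventually drop below `δ ‖x' - x‖ > 0`.
-/

open Set Filter Topology
open scoped InnerProductSpace

noncomputable section

abbrev Euc (n : ℕ) := EuclideanSpace ℝ (Fin n)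

/-- The subdifferential of a real-valued function `h` at `u`. -/
def SubdiffR {n : ℕ} (h : Euc n → ℝ) (u : Euc n) : Set (Euc n) :=
  {ξ | ∀ z, h u + ⟪ξ, z - u⟫_ℝ ≤ h z}

/-- Convexity for extended-real-valued functions. -/
def ConvexEReal {n : ℕ} (g : Euc n → EReal) : Prop :=
  ∀ x y : Euc n, ∀ a b : ℝ, 0 ≤ a → 0 ≤ b → a + b = 1 →
    g (a • x + b • y) ≤ (a : EReal) * g x + (b : EReal) * g y

/-- `g` is proper: nowhere `⊥` and somewhere finite. -/
def ProperE {n : ℕ} (g : Euc n → EReal) : Prop :=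
  (∀ x, g x ≠ ⊥) ∧ ∃ x, g x ≠ ⊤

/-- `P` is the proximal mapping of `g`: for every `α > 0` and every `x`, `P α x` is
the unique minimizer over `ℝⁿ` of `y ↦ g y + (1/(2α)) ‖x - y‖²`. -/
def IsProx {n : ℕ} (g : Euc n → EReal) (P : ℝ → Euc n → Euc n) : Prop :=
  ∀ α : ℝ, 0 < α → ∀ x p, P α x = p ↔
    (∀ y, g p + ((1/(2*α) * ‖x - p‖^2 : ℝ) : EReal) ≤ g y + ((1/(2*α) * ‖x - y‖^2 : ℝ) : EReal))

section InnerProductSpace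

variable {E : Type*} [NormedAddCommGroup E] [InnerProductSpace ℝ E]

theorem norm_smul_sub_smul_le_of_norm_sq_le_inner {a b L : ℝ} (ha : 0 ≤ a) (hb : 0 ≤ b)
    (hL : 0 < L) (hbL : b * L ≤ 2 * a) {d e : E} (hde : ‖e‖ ^ 2 ≤ L * ⟪e, d⟫_ℝ) :
    ‖a • d - b • e‖ ≤ a * ‖d‖ := by
  have hinner : 0 ≤ ⟪e, d⟫_ℝ := nonneg_of_mul_nonneg_right ((sq_nonneg ‖e‖).trans hde) hL
  refine le_of_pow_le_pow_left₀ two_ne_zero (mul_nonneg ha (norm_nonneg d)) ?_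
  rw [norm_sub_sq_real, norm_smul, norm_smul, real_inner_smul_left, real_inner_smul_right,
    real_inner_comm, Real.norm_of_nonneg ha, Real.norm_of_nonneg hb]
  nlinarith [mul_le_mul_of_nonneg_left hde (sq_nonneg b), mul_le_mul_of_nonneg_right hbL
    (mul_nonneg hb hinner)]

variable [CompleteSpace E] {f : E → ℝ} {f' : E → E}

theorem HasGradientAt.hasDerivAt_add_smul {g x d : E} {t : ℝ}
    (hf : HasGradientAt f g (x + t • d)) :
    HasDerivAt (fun s : ℝ => f (x + s • d)) ⟪g, d⟫_ℝ t := by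
  have hline : HasDerivAt (fun s : ℝ => x + s • d) d t := by
    simpa using ((hasDerivAt_id t).smul_const d).const_add x
  have := hf.hasFDerivAt.comp_hasDerivAt t hline
  rw [InnerProductSpace.toDual_apply_apply] at this
  exact this

theorem ConvexOn.add_inner_le_of_hasGradientAt (hconv : ConvexOn ℝ univ f) {g x : E}
    (hg : HasGradientAt f g x) (y : E) : f x + ⟪g, y - x⟫_ℝ ≤ f y := by
  have hline : ConvexOn ℝ univ fun s : ℝ => f (x + s • (y - x)) := by
    simpa [Function.comp_def, AffineMap.lineMap_apply_module', add_comm] using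
      hconv.comp_affineMap (AffineMap.lineMap x y)
  have hderiv : HasDerivAt (fun s : ℝ => f (x + s • (y - x))) ⟪g, y - x⟫_ℝ 0 :=
    HasGradientAt.hasDerivAt_add_smul (by simpa using hg)
  have := hline.le_slope_of_hasDerivAt (mem_univ 0) (mem_univ 1) one_pos hderiv
  simp only [slope_def_field, one_smul, add_sub_cancel, zero_smul, add_zero, sub_zero, div_one]
    at this
  linarith

theorem le_add_inner_add_of_lipschitz_gradient {L : ℝ} (hf : ∀ z, HasGradientAt f (f' z) z)
    (hL : ∀ z w, ‖f' z - f' w‖ ≤ L * ‖z - w‖) (x y : E) :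
    f y ≤ f x + ⟪f' x, y - x⟫_ℝ + L / 2 * ‖y - x‖ ^ 2 := by
  set d := y - x
  set ψ : ℝ → ℝ := fun t => f (x + t • d) - t * ⟪f' x, d⟫_ℝ - t ^ 2 * (L / 2 * ‖d‖ ^ 2)
  have hψ : ∀ t, HasDerivAt ψ (⟪f' (x + t • d) - f' x, d⟫_ℝ - t * (L * ‖d‖ ^ 2)) t := by
    intro t
    refine ((((hf _).hasDerivAt_add_smul).sub ((hasDerivAt_id t).mul_const _)).sub
      ((hasDerivAt_pow 2 t).mul_const (L / 2 * ‖d‖ ^ 2))).congr_deriv ?_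
    rw [inner_sub_left]
    simp only [one_mul, Nat.cast_ofNat, Nat.add_one_sub_one, pow_one]
    ring
  have hψ_nonpos : ∀ t ∈ interior (Icc (0 : ℝ) 1),
      ⟪f' (x + t • d) - f' x, d⟫_ℝ - t * (L * ‖d‖ ^ 2) ≤ 0 := by
    intro t ht
    rw [interior_Icc] at ht
    have hlip : ‖f' (x + t • d) - f' x‖ ≤ L * (t * ‖d‖) := by
      simpa [norm_smul, abs_of_pos ht.1] using hL (x + t • d) x
    nlinarith [real_inner_le_norm (f' (x + t • d) - f' x) d, norm_nonneg d]
  have hanti : AntitoneOn ψ (Icc 0 1) :=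
    antitoneOn_of_hasDerivWithinAt_nonpos (convex_Icc 0 1)
      (fun t _ => (hψ t).continuousAt.continuousWithinAt) (fun t _ => (hψ t).hasDerivWithinAt)
      hψ_nonpos
  have := hanti (left_mem_Icc.mpr zero_le_one) (right_mem_Icc.mpr zero_le_one) zero_le_one
  simp only [ψ, d, zero_smul, one_smul, add_zero, add_sub_cancel] at this
  linarith

theorem ConvexOn.add_inner_add_norm_sq_le {L : ℝ} (hconv : ConvexOn ℝ univ f) (hL0 : 0 < L)
    (hf : ∀ z, HasGradientAt f (f' z) z) (hL : ∀ z w, ‖f' z - f' w‖ ≤ L * ‖z - w‖) (x y : E) :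
    f x + ⟪f' x, y - x⟫_ℝ + ‖f' y - f' x‖ ^ 2 / (2 * L) ≤ f y := by
  set e := f' y - f' x with he_def
  -- bound `f (y - L⁻¹ • e)` above by the descent lemma at `y`, below by convexity at `x`
  have hdescent := le_add_inner_add_of_lipschitz_gradient hf hL y (y - L⁻¹ • e)
  have hsupport := hconv.add_inner_le_of_hasGradientAt (hf x) (y - L⁻¹ • e)
  have he : L⁻¹ * ⟪f' y, e⟫_ℝ - L⁻¹ * ⟪f' x, e⟫_ℝ = 2 * (‖e‖ ^ 2 / (2 * L)) := by
    rw [← mul_sub, ← inner_sub_left, ← he_def, real_inner_self_eq_norm_sq]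
    field_simp
  rw [sub_sub_cancel_left, inner_neg_right, real_inner_smul_right, norm_neg, norm_smul,
    Real.norm_of_nonneg (inv_nonneg.mpr hL0.le)] at hdescent
  rw [sub_right_comm, inner_sub_right, real_inner_smul_right] at hsupport
  have hsq : L / 2 * (L⁻¹ * ‖e‖) ^ 2 = ‖e‖ ^ 2 / (2 * L) := by field_simp
  linarith

theorem ConvexOn.norm_sq_gradient_sub_le_inner {L : ℝ} (hconv : ConvexOn ℝ univ f) (hL0 : 0 < L)
    (hf : ∀ z, HasGradientAt f (f' z) z) (hL : ∀ z w, ‖f' z - f' w‖ ≤ L * ‖z - w‖) (z w : E) :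
    ‖f' z - f' w‖ ^ 2 ≤ L * ⟪f' z - f' w, z - w⟫_ℝ := by
  have hzw := hconv.add_inner_add_norm_sq_le hL0 hf hL w z
  have hwz := hconv.add_inner_add_norm_sq_le hL0 hf hL z w
  rw [norm_sub_rev] at hwz
  have hsum : ‖f' z - f' w‖ ^ 2 / L ≤ ⟪f' z - f' w, z - w⟫_ℝ := by
    have hneg : ⟪f' z, w - z⟫_ℝ = -⟪f' z, z - w⟫_ℝ := by rw [← inner_neg_right, neg_sub]
    rw [inner_sub_left]
    have : ‖f' z - f' w‖ ^ 2 / L = 2 * (‖f' z - f' w‖ ^ 2 / (2 * L)) := by field_simp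
    linarith
  rwa [div_le_iff₀' hL0] at hsum

end InnerProductSpace

namespace IsProx

variable {n : ℕ} {g : Euc n → EReal} {P : ℝ → Euc n → Euc n} {α : ℝ}

theorem apply_ne_top (hP : IsProx g P) (hg : ProperE g) (hα : 0 < α) (u : Euc n) :
    g (P α u) ≠ ⊤ := by
  obtain ⟨y, hy⟩ := hg.2
  intro htop
  have hmin := (hP α hα u _).mp rfl y
  rw [htop, EReal.top_add_coe, top_le_iff, ← EReal.coe_toReal hy (hg.1 y), ← EReal.coe_add]
    at hmin
  exact EReal.coe_ne_top _ hmin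

theorem inner_sub_le (hP : IsProx g P) (hg : ConvexEReal g) (hα : 0 < α) (u : Euc n)
    {y : Euc n} {gp gy : ℝ} (hgp : g (P α u) = gp) (hgy : g y = gy) :
    ⟪u - P α u, y - P α u⟫_ℝ ≤ α * (gy - gp) := by
  set p := P α u
  set d := y - p with hd
  have hsegment : ∀ t ∈ Ioc (0 : ℝ) 1,
      gp + 1 / (2 * α) * ‖u - p‖ ^ 2 ≤
        (1 - t) * gp + t * gy + 1 / (2 * α) * ‖u - (p + t • d)‖ ^ 2 := by
    intro t ht
    have hconv := hg p y (1 - t) t (by linarith [ht.2]) ht.1.le (by ring)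
    rw [show (1 - t) • p + t • y = p + t • d by rw [hd]; module, hgp, hgy] at hconv
    have hmin := (hP α hα u p).mp rfl (p + t • d)
    rw [hgp] at hmin
    exact_mod_cast hmin.trans (add_le_add_left hconv _)
  have hlinear : ∀ t ∈ Ioc (0 : ℝ) 1, ⟪u - p, d⟫_ℝ ≤ α * (gy - gp) + t * (‖d‖ ^ 2 / 2) := by
    intro t ht
    have h := hsegment t ht
    rw [show u - (p + t • d) = (u - p) - t • d by abel, norm_sub_sq_real (u - p), norm_smul,
      real_inner_smul_right, Real.norm_of_nonneg ht.1.le] at h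
    have h' : t * (2 * ⟪u - p, d⟫_ℝ) ≤ t * (2 * α * (gy - gp) + t * ‖d‖ ^ 2) := by
      field_simp at h
      nlinarith
    linarith [le_of_mul_le_mul_left h' ht.1]
  have hlim : Tendsto (fun t => α * (gy - gp) + t * (‖d‖ ^ 2 / 2)) (𝓝[>] 0)
      (𝓝 (α * (gy - gp))) := by
    exact ((by fun_prop : Continuous fun t : ℝ => α * (gy - gp) + t * (‖d‖ ^ 2 / 2)).tendsto' 0 _
      (by simp)).mono_left nhdsWithin_le_nhds
  exact ge_of_tendsto hlim (eventually_of_mem (Ioc_mem_nhdsGT one_pos) hlinear)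

theorem norm_sub_sq_le_inner (hP : IsProx g P) (hgp : ProperE g) (hgc : ConvexEReal g)
    (hα : 0 < α) (u v : Euc n) :
    ‖P α u - P α v‖ ^ 2 ≤ ⟪u - v, P α u - P α v⟫_ℝ := by
  have hfinite : ∀ w, g (P α w) = ((g (P α w)).toReal : EReal) := fun w =>
    (EReal.coe_toReal (hP.apply_ne_top hgp hα w) (hgp.1 _)).symm
  have hu := hP.inner_sub_le hgc hα u (hfinite u) (hfinite v)
  have hv := hP.inner_sub_le hgc hα v (hfinite v) (hfinite u)
  set p := P α u
  set q := P α v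
  have hsum : ⟪u - p, q - p⟫_ℝ + ⟪v - q, p - q⟫_ℝ = ‖p - q‖ ^ 2 - ⟪u - v, p - q⟫_ℝ := by
    rw [← neg_sub p q, inner_neg_right, neg_add_eq_sub, ← inner_sub_left,
      show v - q - (u - p) = (p - q) - (u - v) by abel, inner_sub_left,
      real_inner_self_eq_norm_sq]
  linarith

theorem norm_sub_le (hP : IsProx g P) (hgp : ProperE g) (hgc : ConvexEReal g) (hα : 0 < α)
    (u v : Euc n) : ‖P α u - P α v‖ ≤ ‖u - v‖ := by
  have hfirm := hP.norm_sub_sq_le_inner hgp hgc hα u v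
  have hcs := real_inner_le_norm (u - v) (P α u - P α v)
  nlinarith [norm_nonneg (u - v), norm_nonneg (P α u - P α v)]

theorem norm_sub_le_of_gradient_step (hP : IsProx g P) (hgp : ProperE g)
    (hgc : ConvexEReal g) {f : Euc n → ℝ} {f' : Euc n → Euc n} {L a : ℝ} (hL0 : 0 < L)
    (hf : ConvexOn ℝ univ f) (hgrad : ∀ z, HasGradientAt f (f' z) z)
    (hL : ∀ z w, ‖f' z - f' w‖ ≤ L * ‖z - w‖) (ha : 0 ≤ a) (hα : 0 < α) (hαL : α * L ≤ 2 * a)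
    (c w₁ w₂ : Euc n) :
    ‖P α (a • w₁ - α • f' w₁ + c) - P α (a • w₂ - α • f' w₂ + c)‖ ≤ a * ‖w₁ - w₂‖ :=
  calc _ ≤ ‖(a • w₁ - α • f' w₁ + c) - (a • w₂ - α • f' w₂ + c)‖ := hP.norm_sub_le hgp hgc hα _ _
    _ = ‖a • (w₁ - w₂) - α • (f' w₁ - f' w₂)‖ := by congr 1; module
    _ ≤ a * ‖w₁ - w₂‖ := norm_smul_sub_smul_le_of_norm_sq_le_inner ha hα.le hL0 hαL
      (hf.norm_sq_gradient_sub_le_inner hL0 hgrad hL w₁ w₂)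

end IsProx

theorem stmt3_general {n : ℕ}
    (f : Euc n → ℝ) (f' : Euc n → Euc n) (Lf : ℝ) (hLf : 0 < Lf)
    (hfconv : ConvexOn ℝ Set.univ f)
    (hfgrad : ∀ z, HasGradientAt f (f' z) z)
    (hflip : ∀ z w, ‖f' z - f' w‖ ≤ Lf * ‖z - w‖)
    (g : Euc n → EReal) (hgproper : ProperE g) (hgconv : ConvexEReal g)
    (P : ℝ → Euc n → Euc n) (hP : IsProx g P)
    (lam mu δ : ℝ) (hlam : 0 < lam) (hmu : mu = 2/(2*lam + Lf)) (hδ : 0 < δ)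
    (x x' : Euc n) (hxx : x ≠ x') (η : Euc n)
    (z : ℕ → Euc n)
    (hz : ∀ m : ℕ, z (m+1) = P mu ((1 - mu*lam) • z m - mu • f' (z m) + (mu*lam) • x + mu • η)) :
    ∃ N : ℕ, ∀ m ≥ N, ‖z (m+1) - z m‖ ≤ δ * ‖x' - x‖ := by
  have hmu0 : 0 < mu := by rw [hmu]; positivity
  have hmuLf : mu * Lf = 2 * (1 - mu * lam) := by
    rw [hmu]; field_simp; ring
  have hq0 : 0 ≤ 1 - mu * lam := by linarith [mul_pos hmu0 hLf]
  have hq1 : 1 - mu * lam < 1 := by linarith [mul_pos hmu0 hlam]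
  have hcontract : ∀ m, ‖z (m + 2) - z (m + 1)‖ ≤ (1 - mu * lam) * ‖z (m + 1) - z m‖ := by
    intro m
    rw [hz (m + 1), hz m, add_assoc, add_assoc]
    exact hP.norm_sub_le_of_gradient_step hgproper hgconv hLf hfconv hfgrad hflip hq0 hmu0
      hmuLf.le _ _ _
  have hsummable : Summable fun m => z (m + 1) - z m :=
    summable_of_ratio_norm_eventually_le hq1 (Eventually.of_forall hcontract)
  have hgap : ‖(0 : Euc n)‖ < δ * ‖x' - x‖ := by
    rw [norm_zero]; exact mul_pos hδ (norm_sub_pos_iff.mpr hxx.symm)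
  obtain ⟨N, hN⟩ := eventually_atTop.mp (hsummable.tendsto_atTop_zero.norm.eventually_lt_const hgap)
  exact ⟨N, fun m hm => (hN m hm).le⟩

/-- With `λ > 0`, `μ = 2/(2λ + L_f)`, `δ > 0`, `x ≠ x'`, `η ∈ ∂h(x)` and
`S(z) = Prox_{μg}((1-μλ)z - μ∇f(z) + μλx + μη)`, the Picard iterates `z_m = S(z_{m-1})`
starting from any `z₀` satisfy `‖z_m - z_{m-1}‖ ≤ δ‖x' - x‖` for all sufficiently large `m`. -/
theorem stmt3 {n : ℕ}
    (f : Euc n → ℝ) (f' : Euc n → Euc n) (Lf : ℝ) (hLf : 0 < Lf)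
    (hfconv : ConvexOn ℝ Set.univ f)
    (hfgrad : ∀ z, HasGradientAt f (f' z) z)
    (hflip : ∀ z w, ‖f' z - f' w‖ ≤ Lf * ‖z - w‖)
    (g : Euc n → EReal) (hgproper : ProperE g) (hgconv : ConvexEReal g)
    (hglsc : LowerSemicontinuous g)
    (h : Euc n → ℝ) (hhconv : ConvexOn ℝ Set.univ h)
    (P : ℝ → Euc n → Euc n) (hP : IsProx g P)
    (lam mu δ : ℝ) (hlam : 0 < lam) (hmu : mu = 2/(2*lam + Lf)) (hδ : 0 < δ)
    (x x' : Euc n) (hxx : x ≠ x') (η : Euc n) (hη : η ∈ SubdiffR h x)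
    (z : ℕ → Euc n)
    (hz : ∀ m : ℕ, z (m+1) = P mu ((1 - mu*lam) • z m - mu • f' (z m) + (mu*lam) • x + mu • η)) :
    ∃ N : ℕ, ∀ m ≥ N, ‖z (m+1) - z m‖ ≤ δ * ‖x' - x‖ :=
  stmt3_general f f' Lf hLf hfconv hfgrad hflip g hgproper hgconv P hP lam mu δ hlam hmu hδ x x' hxx
    η z hz
end
end

section
/- Let (x^k)_{k ≥ −1} be a cDCA sequence with x⁰ ∈ dom g, and suppose F is bounded below on ℝⁿ. Then Σ_{k=0}^∞ ‖x^k − x^{k+1}‖² is finite, and consequently ‖x^k − x^{k+1}‖ → 0 as k → ∞. -/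
/-! The quantity `F(xᵏ) + τ ‖x^{k-1} - xᵏ‖²` decreases by at least `(λ/2 - τ) ‖xᵏ - x^{k+1}‖²`
at every step. This follows from the optimality of `x^{k+1}` in the proximal subproblem, the
subgradient inequalities for `f` and `h`, and the co-coercivity of `∇f` (Baillon–Haddad): the
latter bounds the error made by evaluating the gradient at `yᵏ` instead of `x^{k+1}` by
`(L_f/2) ‖x^{k+1} - yᵏ‖ ≤ (L_f δ/2) ‖x^{k-1} - xᵏ‖`, and Young's inequality splits the resulting
cross term. Since `δ < 2λ/L_f` means `τ < λ/2` and `F` is bounded below, the decrements telescope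
to a finite sum. -/

open Set Filter Topology
open scoped InnerProductSpace

noncomputable section

/-- A cDCA sequence, indexed so that `x 0 = x⁻¹` and `x (k+1) = xᵏ` for `k ≥ 0`:
for every `k ≥ 0` there exist `ηᵏ ∈ ∂h(xᵏ)` and `yᵏ` with
`x^{k+1} = Prox_{μg}((1-μλ)yᵏ - μ∇f(yᵏ) + μλxᵏ + μηᵏ)` and
`‖x^{k+1} - yᵏ‖ ≤ δ‖x^{k-1} - xᵏ‖`. -/
def IsCDCA {n : ℕ} (f' : Euc n → Euc n) (h : Euc n → ℝ) (P : ℝ → Euc n → Euc n)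
    (lam mu δ : ℝ) (x : ℕ → Euc n) : Prop :=
  ∀ k : ℕ, ∃ η ∈ SubdiffR h (x (k+1)), ∃ y,
    x (k+2) = P mu ((1 - mu*lam) • y - mu • f' y + (mu*lam) • x (k+1) + mu • η) ∧
    ‖x (k+2) - y‖ ≤ δ * ‖x k - x (k+1)‖

section Smooth

variable {E : Type*} [NormedAddCommGroup E] [InnerProductSpace ℝ E] [CompleteSpace E]
  {f : E → ℝ} {f' : E → E} {L : ℝ}

theorem HasGradientAt.hasDerivAt_comp_add_smul {a v : E} {t : ℝ}
    (hf : HasGradientAt f (f' (a + t • v)) (a + t • v)) :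
    HasDerivAt (fun s : ℝ => f (a + s • v)) ⟪f' (a + t • v), v⟫_ℝ t := by
  have hline : HasDerivAt (fun s : ℝ => a + s • v) v t := by
    simpa using ((hasDerivAt_id t).smul_const v).const_add a
  have := hf.hasFDerivAt.comp_hasDerivAt t hline
  simp only [InnerProductSpace.toDual_apply_apply] at this
  exact this

theorem ConvexOn.add_inner_gradient_le (hconv : ConvexOn ℝ univ f) {a : E}
    (hf : HasGradientAt f (f' a) a) (b : E) : f a + ⟪f' a, b - a⟫_ℝ ≤ f b := by
  have hline : ConvexOn ℝ univ (fun t : ℝ => f (a + t • (b - a))) := by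
    have hcomp := hconv.comp_affineMap (AffineMap.lineMap a b)
    have heq : f ∘ AffineMap.lineMap a b = fun t : ℝ => f (a + t • (b - a)) := by
      ext t; simp [AffineMap.lineMap_apply_module', add_comm]
    rwa [heq, preimage_univ] at hcomp
  have hderiv := HasGradientAt.hasDerivAt_comp_add_smul (f' := f') (v := b - a) (t := 0)
    (by simpa using hf)
  have := hline.le_slope_of_hasDerivAt (mem_univ 0) (mem_univ 1) one_pos (by simpa using hderiv)
  simp only [slope_def_field, one_smul, add_sub_cancel, zero_smul, add_zero, sub_zero,
    div_one] at this
  linarith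

theorem le_add_inner_gradient_add_sq (hgrad : ∀ z, HasGradientAt f (f' z) z)
    (hlip : ∀ z w, ‖f' z - f' w‖ ≤ L * ‖z - w‖) (a b : E) :
    f b ≤ f a + ⟪f' a, b - a⟫_ℝ + L / 2 * ‖b - a‖ ^ 2 := by
  set v := b - a
  let ψ : ℝ → ℝ := fun t => f (a + t • v) - t * ⟪f' a, v⟫_ℝ - L / 2 * t ^ 2 * ‖v‖ ^ 2
  have hψ : ∀ t, HasDerivAt ψ (⟪f' (a + t • v), v⟫_ℝ - ⟪f' a, v⟫_ℝ - L * t * ‖v‖ ^ 2) t := fun t =>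
    (((hgrad (a + t • v)).hasDerivAt_comp_add_smul.sub ((hasDerivAt_id t).mul_const _)).sub
      (((hasDerivAt_pow 2 t).const_mul (L / 2)).mul_const _)).congr_deriv (by push_cast; ring)
  have hanti : AntitoneOn ψ (Ici 0) := by
    refine antitoneOn_of_hasDerivWithinAt_nonpos (convex_Ici 0)
      (fun t _ => (hψ t).continuousAt.continuousWithinAt) (fun t _ => (hψ t).hasDerivWithinAt) ?_
    intro t ht
    rw [interior_Ici, mem_Ioi] at ht
    have hlip_t : ‖f' (a + t • v) - f' a‖ ≤ L * (t * ‖v‖) := by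
      simpa [norm_smul, abs_of_pos ht] using hlip (a + t • v) a
    have : ⟪f' (a + t • v), v⟫_ℝ - ⟪f' a, v⟫_ℝ ≤ L * t * ‖v‖ ^ 2 :=
      calc ⟪f' (a + t • v), v⟫_ℝ - ⟪f' a, v⟫_ℝ = ⟪f' (a + t • v) - f' a, v⟫_ℝ :=
            (inner_sub_left _ _ _).symm
        _ ≤ ‖f' (a + t • v) - f' a‖ * ‖v‖ := real_inner_le_norm _ _
        _ ≤ L * (t * ‖v‖) * ‖v‖ := by gcongr
        _ = L * t * ‖v‖ ^ 2 := by ring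
    linarith
  have := hanti self_mem_Ici (mem_Ici.mpr zero_le_one) zero_le_one
  simp only [ψ, v, one_smul, zero_smul, add_sub_cancel, add_zero, one_mul, one_pow, mul_one,
    zero_mul, sub_zero, ne_eq, OfNat.ofNat_ne_zero, not_false_eq_true, zero_pow, mul_zero] at this
  linarith

theorem ConvexOn.add_inner_gradient_add_sq_le (hconv : ConvexOn ℝ univ f)
    (hgrad : ∀ z, HasGradientAt f (f' z) z) (hlip : ∀ z w, ‖f' z - f' w‖ ≤ L * ‖z - w‖)
    (hL : 0 < L) (p y : E) :
    f y + ⟪f' y, p - y⟫_ℝ + 1 / (2 * L) * ‖f' p - f' y‖ ^ 2 ≤ f p := by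
  set w := f' p - f' y
  -- compare both bounds at the point reached from `p` by a gradient step of length `1 / L`
  set b := p - L⁻¹ • w
  have hlow := hconv.add_inner_gradient_le (hgrad y) b
  have hup := le_add_inner_gradient_add_sq hgrad hlip p b
  have hbp : b - p = -(L⁻¹ • w) := by simp [b]
  have hby : b - y = (p - y) - L⁻¹ • w := by simp only [b]; abel
  rw [hbp, inner_neg_right, real_inner_smul_right, norm_neg, norm_smul, Real.norm_eq_abs,
    abs_of_pos (inv_pos.mpr hL)] at hup
  rw [hby, inner_sub_right, real_inner_smul_right] at hlow
  have hw : L⁻¹ * ⟪f' p, w⟫_ℝ - L⁻¹ * ⟪f' y, w⟫_ℝ = L⁻¹ * ‖w‖ ^ 2 := by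
    rw [← mul_sub, ← inner_sub_left, real_inner_self_eq_norm_sq]
  have hcoef : L / 2 * (L⁻¹ * ‖w‖) ^ 2 = L⁻¹ * ‖w‖ ^ 2 - 1 / (2 * L) * ‖w‖ ^ 2 := by
    field_simp; ring
  linarith

theorem ConvexOn.sq_norm_gradient_sub_le_inner (hconv : ConvexOn ℝ univ f)
    (hgrad : ∀ z, HasGradientAt f (f' z) z) (hlip : ∀ z w, ‖f' z - f' w‖ ≤ L * ‖z - w‖)
    (hL : 0 < L) (p y : E) :
    ‖f' p - f' y‖ ^ 2 ≤ L * ⟪f' p - f' y, p - y⟫_ℝ := by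
  have hpy := hconv.add_inner_gradient_add_sq_le hgrad hlip hL p y
  have hyp := hconv.add_inner_gradient_add_sq_le hgrad hlip hL y p
  rw [norm_sub_rev (f' y)] at hyp
  have hinner : ⟪f' p - f' y, p - y⟫_ℝ = -⟪f' y, p - y⟫_ℝ - ⟪f' p, y - p⟫_ℝ := by
    rw [inner_sub_left, ← neg_sub p y, inner_neg_right]; ring
  have hsum : 1 / L * ‖f' p - f' y‖ ^ 2 ≤ ⟪f' p - f' y, p - y⟫_ℝ := by
    have : 1 / L = 1 / (2 * L) + 1 / (2 * L) := by field_simp; norm_num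
    rw [this]; linarith
  calc ‖f' p - f' y‖ ^ 2 = L * (1 / L * ‖f' p - f' y‖ ^ 2) := by field_simp
    _ ≤ L * ⟪f' p - f' y, p - y⟫_ℝ := by gcongr

theorem ConvexOn.norm_gradient_sub_sub_smul_le (hconv : ConvexOn ℝ univ f)
    (hgrad : ∀ z, HasGradientAt f (f' z) z) (hlip : ∀ z w, ‖f' z - f' w‖ ≤ L * ‖z - w‖)
    (hL : 0 < L) (p y : E) :
    ‖(f' p - f' y) - (L / 2) • (p - y)‖ ≤ L / 2 * ‖p - y‖ := by
  have hco := hconv.sq_norm_gradient_sub_le_inner hgrad hlip hL p y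
  refine le_of_sq_le_sq ?_ (by positivity)
  rw [norm_sub_sq_real, real_inner_smul_right, norm_smul, Real.norm_of_nonneg (by positivity)]
  nlinarith

end Smooth

theorem le_of_forall_mem_Ioc_le_add_mul {a b c : ℝ} (h : ∀ t ∈ Ioc (0 : ℝ) 1, a ≤ b + c * t) :
    a ≤ b := by
  have hlim : Tendsto (fun t : ℝ => b + c * t) (𝓝[>] 0) (𝓝 b) :=
    ((by fun_prop : Continuous fun t : ℝ => b + c * t).tendsto' 0 b (by simp)).mono_left
      nhdsWithin_le_nhds
  exact ge_of_tendsto hlim (eventually_of_mem (Ioc_mem_nhdsGT zero_lt_one) h)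

theorem summable_of_mul_le_sub_succ {a V : ℕ → ℝ} {ρ c : ℝ} (hρ : 0 < ρ) (ha : ∀ k, 0 ≤ a k)
    (hV : ∀ k, c ≤ V k) (hdesc : ∀ k, ρ * a k ≤ V k - V (k + 1)) : Summable a := by
  refine summable_of_sum_range_le ha (c := (V 0 - c) / ρ) fun N => ?_
  rw [le_div_iff₀' hρ, Finset.mul_sum]
  calc ∑ i ∈ Finset.range N, ρ * a i ≤ ∑ i ∈ Finset.range N, (V i - V (i + 1)) :=
        Finset.sum_le_sum fun i _ => hdesc i
    _ = V 0 - V N := Finset.sum_range_sub' V N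
    _ ≤ V 0 - c := by linarith [hV N]

namespace IsProx

variable {n : ℕ} {g : Euc n → EReal} {P : ℝ → Euc n → Euc n} {μ : ℝ}

theorem ne_top (hP : IsProx g P) (hμ : 0 < μ) {u : Euc n} (hu : g u ≠ ⊤) (z : Euc n) :
    g (P μ z) ≠ ⊤ := by
  intro htop
  have h := (hP μ hμ z (P μ z)).mp rfl u
  rw [htop, EReal.top_add_coe, top_le_iff] at h
  exact EReal.add_ne_top hu (EReal.coe_ne_top _) h

theorem toReal_add_inner_le (hP : IsProx g P) (hbot : ∀ x, g x ≠ ⊥) (hconv : ConvexEReal g)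
    (hμ : 0 < μ) (z : Euc n) {u : Euc n} (hu : g u ≠ ⊤) :
    (g (P μ z)).toReal + 1 / μ * ⟪z - P μ z, u - P μ z⟫_ℝ ≤ (g u).toReal := by
  set p := P μ z
  set c := 1 / (2 * μ)
  have hgp : ((g p).toReal : EReal) = g p := EReal.coe_toReal (hP.ne_top hμ hu z) (hbot p)
  have hgu : ((g u).toReal : EReal) = g u := EReal.coe_toReal hu (hbot u)
  -- test the minimality of `p` against the points `p + t • (u - p)` and let `t → 0⁺`
  have hsegment : ∀ t ∈ Ioc (0 : ℝ) 1, 2 * c * ⟪z - p, u - p⟫_ℝ ≤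
      (g u).toReal - (g p).toReal + c * ‖u - p‖ ^ 2 * t := by
    intro t ⟨ht0, ht1⟩
    have hmin := (hP μ hμ z p).mp rfl (p + t • (u - p))
    have hcomb : (1 - t) • p + t • u = p + t • (u - p) := by module
    have hg := hconv p u (1 - t) t (by linarith) ht0.le (by ring)
    rw [hcomb, ← hgp, ← hgu, ← EReal.coe_mul, ← EReal.coe_mul, ← EReal.coe_add] at hg
    have hreal : (g p).toReal + c * ‖z - p‖ ^ 2 ≤
        (1 - t) * (g p).toReal + t * (g u).toReal + c * ‖z - (p + t • (u - p))‖ ^ 2 := by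
      rw [← EReal.coe_le_coe_iff, EReal.coe_add, EReal.coe_add _ (c * _), hgp]
      exact hmin.trans (add_le_add_left hg _)
    have hnorm : ‖z - (p + t • (u - p))‖ ^ 2 =
        ‖z - p‖ ^ 2 - 2 * t * ⟪z - p, u - p⟫_ℝ + t ^ 2 * ‖u - p‖ ^ 2 := by
      rw [← sub_sub, norm_sub_sq_real, real_inner_smul_right, norm_smul, Real.norm_of_nonneg ht0.le]
      ring
    rw [hnorm] at hreal
    nlinarith
  have h2c : 2 * c = 1 / μ := by simp only [c]; field_simp
  linarith [h2c ▸ le_of_forall_mem_Ioc_le_add_mul hsegment]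

end IsProx

/-- On `dom g` this is the objective `F = f - h + g`. -/
def realObjective {n : ℕ} (f h : Euc n → ℝ) (g : Euc n → EReal) (x : Euc n) : ℝ :=
  f x - h x + (g x).toReal

section CDCA

variable {n : ℕ} {f : Euc n → ℝ} {f' : Euc n → Euc n} {L : ℝ} {g : Euc n → EReal}
  {h : Euc n → ℝ} {P : ℝ → Euc n → Euc n} {lam μ δ : ℝ}

theorem realObjective_prox_step_add_le (hL : 0 < L) (hfconv : ConvexOn ℝ univ f)
    (hfgrad : ∀ z, HasGradientAt f (f' z) z) (hflip : ∀ z w, ‖f' z - f' w‖ ≤ L * ‖z - w‖)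
    (hbot : ∀ x, g x ≠ ⊥) (hgconv : ConvexEReal g) (hP : IsProx g P)
    (hμ : 0 < μ) (hμlam : μ * (lam + L / 2) = 1) {u y η p : Euc n}
    (hη : η ∈ SubdiffR h u) (hu : g u ≠ ⊤)
    (hp : p = P μ ((1 - μ * lam) • y - μ • f' y + (μ * lam) • u + μ • η)) :
    realObjective f h g p + lam * ‖u - p‖ ^ 2 ≤
      realObjective f h g u + L / 2 * ‖p - y‖ * ‖u - p‖ := by
  set z := (1 - μ * lam) • y - μ • f' y + (μ * lam) • u + μ • η
  set v := (f' p - f' y) - (L / 2) • (p - y)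
  have hprox := hP.toReal_add_inner_le hbot hgconv hμ z hu
  rw [← hp] at hprox
  have hzp : z - p = μ • (lam • (u - p) + v - f' p + η) := by
    simp only [z, v]
    match_scalars <;> first | ring1 | linear_combination hμlam | linear_combination -hμlam
  have hinner : 1 / μ * ⟪z - p, u - p⟫_ℝ =
      lam * ‖u - p‖ ^ 2 + ⟪v, u - p⟫_ℝ - ⟪f' p, u - p⟫_ℝ + ⟪η, u - p⟫_ℝ := by
    rw [hzp, real_inner_smul_left, ← mul_assoc, one_div_mul_cancel hμ.ne', one_mul,
      inner_add_left, inner_sub_left, inner_add_left, real_inner_smul_left,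
      real_inner_self_eq_norm_sq]
  have hf := hfconv.add_inner_gradient_le (hfgrad p) u
  have hh : h u - ⟪η, u - p⟫_ℝ ≤ h p := by
    have := hη p
    rwa [← neg_sub u p, inner_neg_right, ← sub_eq_add_neg] at this
  have hv : -(L / 2 * ‖p - y‖ * ‖u - p‖) ≤ ⟪v, u - p⟫_ℝ := by
    have hnorm := hfconv.norm_gradient_sub_sub_smul_le hfgrad hflip hL p y
    have := neg_le_of_abs_le (abs_real_inner_le_norm v (u - p))
    nlinarith [norm_nonneg (u - p)]
  simp only [realObjective]
  linarith

theorem IsCDCA.ne_top {x : ℕ → Euc n} (hx : IsCDCA f' h P lam μ δ x) (hP : IsProx g P)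
    (hμ : 0 < μ) (hx0 : g (x 1) ≠ ⊤) : ∀ k, g (x (k + 1)) ≠ ⊤
  | 0 => hx0
  | k + 1 => by
    obtain ⟨η, -, y, hxk, -⟩ := hx k
    exact hxk ▸ hP.ne_top hμ hx0 _

theorem IsCDCA.realObjective_add_le {x : ℕ → Euc n} (hx : IsCDCA f' h P lam μ δ x)
    (hL : 0 < L) (hfconv : ConvexOn ℝ univ f) (hfgrad : ∀ z, HasGradientAt f (f' z) z)
    (hflip : ∀ z w, ‖f' z - f' w‖ ≤ L * ‖z - w‖) (hbot : ∀ x, g x ≠ ⊥)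
    (hgconv : ConvexEReal g) (hP : IsProx g P) (hlam : 0 < lam) (hμ : 0 < μ)
    (hμlam : μ * (lam + L / 2) = 1) {k : ℕ} (hk : g (x (k + 1)) ≠ ⊤) :
    realObjective f h g (x (k + 2)) + lam / 2 * ‖x (k + 1) - x (k + 2)‖ ^ 2 ≤
      realObjective f h g (x (k + 1)) + L ^ 2 * δ ^ 2 / (8 * lam) * ‖x k - x (k + 1)‖ ^ 2 := by
  obtain ⟨η, hη, y, hxk, hy⟩ := hx k
  have hstep := realObjective_prox_step_add_le hL hfconv hfgrad hflip hbot hgconv hP hμ hμlam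
    hη hk hxk
  set a := ‖x k - x (k + 1)‖
  set b := ‖x (k + 1) - x (k + 2)‖
  have hcross : L / 2 * ‖x (k + 2) - y‖ * b ≤ L / 2 * (δ * a) * b := by gcongr
  -- Young's inequality, with the weights chosen so that `b ^ 2` gets the coefficient `lam / 2`
  have hyoung : L / 2 * (δ * a) * b ≤ lam / 2 * b ^ 2 + L ^ 2 * δ ^ 2 / (8 * lam) * a ^ 2 := by
    have hsq : lam / 2 * b ^ 2 + L ^ 2 * δ ^ 2 / (8 * lam) * a ^ 2 - L / 2 * (δ * a) * b =
        (2 * lam * b - L * δ * a) ^ 2 / (8 * lam) := by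
      field_simp; ring
    have : 0 ≤ (2 * lam * b - L * δ * a) ^ 2 / (8 * lam) := by positivity
    linarith
  linarith

end CDCA

theorem stmt6_general {n : ℕ}
    (f : Euc n → ℝ) (f' : Euc n → Euc n) (Lf : ℝ) (hLf : 0 < Lf)
    (hfconv : ConvexOn ℝ Set.univ f)
    (hfgrad : ∀ z, HasGradientAt f (f' z) z)
    (hflip : ∀ z w, ‖f' z - f' w‖ ≤ Lf * ‖z - w‖)
    (g : Euc n → EReal) (hgproper : ProperE g) (hgconv : ConvexEReal g)
    (h : Euc n → ℝ)
    (F : Euc n → EReal) (hF : ∀ z, F z = ((f z - h z : ℝ) : EReal) + g z)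
    (P : ℝ → Euc n → Euc n) (hP : IsProx g P)
    (lam δ mu : ℝ) (hlam : 0 < lam) (hδ : δ ∈ Set.Ioo 0 (2*lam/Lf))
    (hmu : mu = 2/(2*lam + Lf))
    (x : ℕ → Euc n) (hx : IsCDCA f' h P lam mu δ x) (hx0 : g (x 1) ≠ ⊤)
    (hbdd : ∃ c : ℝ, ∀ z : Euc n, (c : EReal) ≤ F z) :
    Summable (fun k : ℕ => ‖x (k+1) - x (k+2)‖^2) ∧
      Tendsto (fun k : ℕ => ‖x (k+1) - x (k+2)‖) atTop (nhds 0) := by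
  obtain ⟨c, hc⟩ := hbdd
  have hμ : 0 < mu := by rw [hmu]; positivity
  have hμlam : mu * (lam + Lf / 2) = 1 := by rw [hmu]; field_simp
  set τ := Lf ^ 2 * δ ^ 2 / (8 * lam)
  have hρ : 0 < lam / 2 - τ := by
    have hLδ : Lf * δ < 2 * lam := by have := (lt_div_iff₀ hLf).mp hδ.2; linarith
    have : Lf ^ 2 * δ ^ 2 < 4 * lam ^ 2 := by nlinarith [mul_pos hLf hδ.1]
    rw [sub_pos, div_lt_iff₀ (by positivity)]
    nlinarith
  have hfin := hx.ne_top hP hμ hx0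
  have hlow : ∀ k, c ≤ realObjective f h g (x (k + 1)) := fun k => by
    have := hc (x (k + 1))
    rwa [hF, ← EReal.coe_toReal (hfin k) (hgproper.1 _), ← EReal.coe_add,
      EReal.coe_le_coe_iff] at this
  have hsum : Summable fun k => ‖x (k + 1) - x (k + 2)‖ ^ 2 :=
    summable_of_mul_le_sub_succ (V := fun k => realObjective f h g (x (k + 1)) +
      τ * ‖x k - x (k + 1)‖ ^ 2) hρ (fun k => by positivity)
      (fun k => le_add_of_le_of_nonneg (hlow k) (by positivity)) fun k => by
        have := hx.realObjective_add_le hLf hfconv hfgrad hflip hgproper.1 hgconv hP hlam hμ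
          hμlam (hfin k)
        linarith
  exact ⟨hsum, by simpa [Real.sqrt_sq (norm_nonneg _)] using hsum.tendsto_atTop_zero.sqrt⟩

/-- For a cDCA sequence with `x⁰ ∈ dom g` and `F = f + g - h` bounded
below on `ℝⁿ`, one has `Σ_{k=0}^∞ ‖xᵏ - x^{k+1}‖² < ∞`, and consequently
`‖xᵏ - x^{k+1}‖ → 0` as `k → ∞`. (Here `x 0 = x⁻¹` and `x (k+1) = xᵏ`.) -/
theorem stmt6 {n : ℕ}
    (f : Euc n → ℝ) (f' : Euc n → Euc n) (Lf : ℝ) (hLf : 0 < Lf)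
    (hfconv : ConvexOn ℝ Set.univ f)
    (hfgrad : ∀ z, HasGradientAt f (f' z) z)
    (hflip : ∀ z w, ‖f' z - f' w‖ ≤ Lf * ‖z - w‖)
    (g : Euc n → EReal) (hgproper : ProperE g) (hgconv : ConvexEReal g)
    (hglsc : LowerSemicontinuous g)
    (h : Euc n → ℝ) (hhconv : ConvexOn ℝ Set.univ h)
    (F : Euc n → EReal) (hF : ∀ z, F z = ((f z - h z : ℝ) : EReal) + g z)
    (P : ℝ → Euc n → Euc n) (hP : IsProx g P)
    (lam δ mu tau : ℝ) (hlam : 0 < lam) (hδ : δ ∈ Set.Ioo 0 (2*lam/Lf))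
    (hmu : mu = 2/(2*lam + Lf)) (htau : tau = Lf^2 * δ^2 / (8*lam))
    (x : ℕ → Euc n) (hx : IsCDCA f' h P lam mu δ x) (hx0 : g (x 1) ≠ ⊤)
    (hbdd : ∃ c : ℝ, ∀ z : Euc n, (c : EReal) ≤ F z) :
    Summable (fun k : ℕ => ‖x (k+1) - x (k+2)‖^2) ∧
      Tendsto (fun k : ℕ => ‖x (k+1) - x (k+2)‖) atTop (nhds 0) :=
  stmt6_general f f' Lf hLf hfconv hfgrad hflip g hgproper hgconv h F hF P hP lam δ mu hlam hδ hmu x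
    hx hx0 hbdd
end
end
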